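/- arXiv:2212.12209 — 2 statements merged into one kernel-verified Lean document; each statement's English description precedes it below -/
import Mathlib

section
/- Joint probability mass function of the subordinated pair: under the rank-m condition, for every t ∈ [0,1) and all i, j, the joint probabilities π_{ij}(t) := ∫_{A_i × A_j} p_t(u,v) du dv satisfy π_{ij}(t) = p_i p_j + Σ_{h≥m} t^h c_{h,i} c_{h,j}, where c_{h,i} := ∫_{A_i} e_h(u) p(u) du and the series converges absolutely; in particular |π_{ij}(t) − p_i p_j| ≤ t^m/(1 − t). -/
open MeasureTheory Real Filter Asymptotics

noncomputable section

/-- The measure `μ` on `ℝ` with density `p` with respect to Lebesgue measure. -/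
def LSmeasure (p : ℝ → ℝ) : Measure ℝ :=
  volume.withDensity fun u => ENNReal.ofReal (p u)

/-- `p` is a measurable probability density on `ℝ`. -/
def IsProbDensity (p : ℝ → ℝ) : Prop :=
  Measurable p ∧ (∀ᵐ u : ℝ, 0 ≤ p u) ∧ (∫ u : ℝ, p u) = 1

/-- `(e k)` is a system of measurable functions, orthonormal in `L²(p(u) du)`,
with `e 0 ≡ 1`. -/
def OrthonormalSystem (p : ℝ → ℝ) (e : ℕ → ℝ → ℝ) : Prop :=
  (∀ u, e 0 u = 1) ∧ (∀ k, Measurable (e k)) ∧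
    ∀ k l, (∫ u : ℝ, e k u * e l u * p u) = if k = l then (1 : ℝ) else 0

/-- The Lancaster–Sarmanov kernel `Q_t(u,v) = ∑_{k ≥ 1} t^k e_k(u) e_k(v)`. -/
def LSker (e : ℕ → ℝ → ℝ) (t : ℝ) (u v : ℝ) : ℝ :=
  ∑' k : ℕ, t ^ (k + 1) * e (k + 1) u * e (k + 1) v

/-- The Lancaster–Sarmanov bivariate density
`p_t(u,v) = p(u) p(v) (1 + Q_t(u,v))`. -/
def LSdens (p : ℝ → ℝ) (e : ℕ → ℝ → ℝ) (t : ℝ) (u v : ℝ) : ℝ :=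
  p u * p v * (1 + LSker e t u v)

/-- The series defining the kernel `Q_t` converges in `L²(μ ⊗ μ)`: it is
a.e. (pointwise) summable and its partial sums converge to `Q_t` in
`L²(μ ⊗ μ)`-norm. -/
def KerConvergesInL2 (p : ℝ → ℝ) (e : ℕ → ℝ → ℝ) (t : ℝ) : Prop :=
  (∀ᵐ w : ℝ × ℝ ∂((LSmeasure p).prod (LSmeasure p)),
      Summable fun k : ℕ => t ^ (k + 1) * e (k + 1) w.1 * e (k + 1) w.2) ∧
    Tendsto
      (fun n : ℕ =>
        ∫ w : ℝ × ℝ,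
          (LSker e t w.1 w.2 -
              ∑ k ∈ Finset.range n, t ^ (k + 1) * e (k + 1) w.1 * e (k + 1) w.2) ^ 2
            ∂((LSmeasure p).prod (LSmeasure p)))
      atTop (nhds 0)

/-! Writing `p_t(u,v) = p(u) p(v) + ∑_{k ≥ 1} t^k (e_k p)(u) (e_k p)(v)`, Fubini turns the
`k`-th term into `t^k c_{k,i} c_{k,j}` once the sum and the integral over `A_i × A_j` may be
exchanged. They may, because `∫ |e_k| p ≤ (∫ e_k² p + ∫ p) / 2 = 1`: the `L¹` norms of the
terms are at most `t^k`, which is summable. The rank condition kills the terms `1 ≤ k < m`,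
and `|c_{h,i}| ≤ 1` bounds the remaining tail by `∑_{h ≥ m} t^h = t^m / (1 - t)`. -/

theorem tsum_nat_add_eq_tsum_of_eq_zero {M : Type*} [AddCommMonoid M] [TopologicalSpace M]
    {f : ℕ → M} {k : ℕ} (hf : ∀ i < k, f i = 0) : ∑' i, f (i + k) = ∑' i, f i :=
  (add_left_injective k).tsum_eq fun i hi =>
    ⟨i - k, Nat.sub_add_cancel (not_lt.1 fun h => hi (hf i h))⟩

theorem abs_mul_le_mul_self_mul_add_div_two {a w : ℝ} (hw : 0 ≤ w) : |a * w| ≤ (a * a * w + w) / 2 := by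
  rw [abs_mul, abs_of_nonneg hw]
  nlinarith [mul_nonneg hw (sq_nonneg (|a| - 1)), sq_abs a]

namespace MeasureTheory

section Integration

variable {α : Type*} [MeasurableSpace α] {μ : Measure α}

theorem integrable_tsum_of_summable_integral_norm {E ι : Type*}
    [NormedAddCommGroup E] [CompleteSpace E] [Countable ι] {F : ι → α → E}
    (hF_int : ∀ i, Integrable (F i) μ) (hF_sum : Summable fun i => ∫ a, ‖F i a‖ ∂μ) :
    Integrable (fun a => ∑' i, F i a) μ := by
  have hlint : ∫⁻ a, ∑' i, ‖F i a‖ₑ ∂μ ≠ ⊤ := by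
    rw [lintegral_tsum fun i => (hF_int i).1.enorm]
    simp_rw [← ofReal_integral_norm_eq_lintegral_enorm (hF_int _)]
    rw [← ENNReal.ofReal_tsum_of_nonneg (fun i => integral_nonneg fun a => norm_nonneg _) hF_sum]
    exact ENNReal.ofReal_ne_top
  have hsum : ∀ᵐ a ∂μ, Summable fun i => F i a := by
    filter_upwards [ae_lt_top' (AEMeasurable.tsum fun i => (hF_int i).1.enorm) hlint]
      with a ha
    exact (tsum_enorm_ne_top_iff_summable_norm.mp ha.ne).of_norm
  refine ⟨aestronglyMeasurable_of_tendsto_ae atTop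
    (fun s => Finset.aestronglyMeasurable_fun_sum s fun i _ => (hF_int i).1) ?_, ?_⟩
  · filter_upwards [hsum] with a ha using ha.hasSum
  · exact (lintegral_mono fun a => enorm_tsum_le_tsum_enorm).trans_lt hlint.lt_top

variable {f w : α → ℝ}

theorem integrable_mul_of_integrable_mul_self_mul (hf : AEStronglyMeasurable f μ)
    (hw0 : 0 ≤ᵐ[μ] w) (hw : Integrable w μ) (hfw : Integrable (fun x => f x * f x * w x) μ) :
    Integrable (fun x => f x * w x) μ :=
  ((hfw.add hw).div_const 2).mono' (hf.mul hw.1) <| by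
    filter_upwards [hw0] with x hx using abs_mul_le_mul_self_mul_add_div_two hx

theorem integral_abs_mul_le (hf : AEStronglyMeasurable f μ) (hw0 : 0 ≤ᵐ[μ] w)
    (hw : Integrable w μ) (hfw : Integrable (fun x => f x * f x * w x) μ) :
    ∫ x, |f x * w x| ∂μ ≤ ((∫ x, f x * f x * w x ∂μ) + ∫ x, w x ∂μ) / 2 := by
  rw [← integral_add hfw hw, ← integral_div]
  refine integral_mono_ae (integrable_mul_of_integrable_mul_self_mul hf hw0 hw hfw).abs
    ((hfw.add hw).div_const 2) ?_
  filter_upwards [hw0] with x hx using abs_mul_le_mul_self_mul_add_div_two hx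

end Integration

section ProductSeries

variable {α β : Type*} [MeasurableSpace α] [MeasurableSpace β]
  {μ : Measure α} {ν : Measure β}

theorem Integrable.const_mul_mul_prod {c : ℝ} {f : α → ℝ} {g : β → ℝ}
    (hf : Integrable f μ) (hg : Integrable g ν) :
    Integrable (fun z => c * f z.1 * g z.2) (μ.prod ν) := by
  simpa only [mul_assoc] using (hf.mul_prod hg).const_mul c

variable [SFinite μ] [SFinite ν]

theorem integral_abs_mul_prod (c : ℝ) (f : α → ℝ) (g : β → ℝ) :
    ∫ z, |c * f z.1 * g z.2| ∂μ.prod ν = |c| * (∫ x, |f x| ∂μ) * ∫ y, |g y| ∂ν := by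
  simp_rw [abs_mul, mul_assoc]
  rw [integral_const_mul, integral_prod_mul (fun x => |f x|) (fun y => |g y|)]

variable {ι : Type*} [Countable ι] {a : ι → ℝ}
  {f : ι → α → ℝ} {g : ι → β → ℝ}

theorem integrable_tsum_mul_prod
    (hf : ∀ i, Integrable (f i) μ) (hg : ∀ i, Integrable (g i) ν)
    (hsum : Summable fun i => |a i| * (∫ x, |f i x| ∂μ) * ∫ y, |g i y| ∂ν) :
    Integrable (fun z => ∑' i, a i * f i z.1 * g i z.2) (μ.prod ν) :=
  integrable_tsum_of_summable_integral_norm (fun i => (hf i).const_mul_mul_prod (hg i)) <| by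
    simpa only [Real.norm_eq_abs, integral_abs_mul_prod] using hsum

theorem integral_tsum_mul_prod
    (hf : ∀ i, Integrable (f i) μ) (hg : ∀ i, Integrable (g i) ν)
    (hsum : Summable fun i => |a i| * (∫ x, |f i x| ∂μ) * ∫ y, |g i y| ∂ν) :
    ∫ z, ∑' i, a i * f i z.1 * g i z.2 ∂μ.prod ν =
      ∑' i, a i * (∫ x, f i x ∂μ) * ∫ y, g i y ∂ν := by
  rw [← integral_tsum_of_summable_integral_norm (fun i => (hf i).const_mul_mul_prod (hg i))
    (by simpa only [Real.norm_eq_abs, integral_abs_mul_prod] using hsum)]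
  congr with i
  simp_rw [mul_assoc]
  rw [integral_const_mul, integral_prod_mul (f i) (g i)]

end ProductSeries

end MeasureTheory

variable {p : ℝ → ℝ} {e : ℕ → ℝ → ℝ}

theorem IsProbDensity.integrable (hp : IsProbDensity p) : Integrable p :=
  Integrable.of_integral_ne_zero (by rw [hp.2.2]; exact one_ne_zero)

namespace OrthonormalSystem

theorem integral_mul_self (he : OrthonormalSystem p e) (k : ℕ) :
    ∫ u, e k u * e k u * p u = 1 := by
  simpa using he.2.2 k k

theorem integrable_mul_self (he : OrthonormalSystem p e) (k : ℕ) :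
    Integrable (fun u => e k u * e k u * p u) :=
  Integrable.of_integral_ne_zero (by rw [he.integral_mul_self]; exact one_ne_zero)

theorem integrable_mul (he : OrthonormalSystem p e) (hp : IsProbDensity p) (k : ℕ) :
    Integrable (fun u => e k u * p u) :=
  integrable_mul_of_integrable_mul_self_mul (he.2.1 k).aestronglyMeasurable hp.2.1 hp.integrable
    (he.integrable_mul_self k)

theorem setIntegral_abs_mul_le_one (he : OrthonormalSystem p e) (hp : IsProbDensity p) (k : ℕ)
    (S : Set ℝ) : ∫ u in S, |e k u * p u| ≤ 1 :=
  calc ∫ u in S, |e k u * p u|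
      ≤ ∫ u, |e k u * p u| :=
        setIntegral_le_integral (he.integrable_mul hp k).abs (.of_forall fun _ => abs_nonneg _)
    _ ≤ ((∫ u, e k u * e k u * p u) + ∫ u, p u) / 2 :=
        integral_abs_mul_le (he.2.1 k).aestronglyMeasurable hp.2.1 hp.integrable
          (he.integrable_mul_self k)
    _ = 1 := by rw [he.integral_mul_self, hp.2.2]; norm_num

theorem abs_setIntegral_mul_le_one (he : OrthonormalSystem p e) (hp : IsProbDensity p) (k : ℕ)
    (S : Set ℝ) : |∫ u in S, e k u * p u| ≤ 1 :=
  abs_integral_le_integral_abs.trans (he.setIntegral_abs_mul_le_one hp k S)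

end OrthonormalSystem

theorem LSdens_eq_add_tsum (p : ℝ → ℝ) (e : ℕ → ℝ → ℝ) (t u v : ℝ) :
    LSdens p e t u v =
      p u * p v + ∑' k : ℕ, t ^ (k + 1) * (e (k + 1) u * p u) * (e (k + 1) v * p v) := by
  rw [LSdens, LSker, mul_add, mul_one, ← tsum_mul_left]
  congr 1
  exact tsum_congr fun k => by ring

theorem setIntegral_setIntegral_LSdens (hp : IsProbDensity p) (he : OrthonormalSystem p e)
    {t : ℝ} (ht0 : 0 ≤ t) (ht1 : t < 1) (S T : Set ℝ) :
    ∫ u in S, ∫ v in T, LSdens p e t u v =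
      (∫ u in S, p u) * (∫ v in T, p v) +
        ∑' k : ℕ, t ^ (k + 1) * (∫ u in S, e (k + 1) u * p u) *
          ∫ v in T, e (k + 1) v * p v := by
  have hint (k : ℕ) : Integrable (fun u => e (k + 1) u * p u) := he.integrable_mul hp (k + 1)
  have hsum : Summable fun k : ℕ => |t ^ (k + 1)| * (∫ u in S, |e (k + 1) u * p u|) *
      ∫ v in T, |e (k + 1) v * p v| := by
    refine .of_nonneg_of_le (fun k => by positivity) (fun k => ?_)
      ((summable_geometric_of_lt_one ht0 ht1).comp_injective (add_left_injective 1))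
    have hS := he.setIntegral_abs_mul_le_one hp (k + 1) S
    have hT := he.setIntegral_abs_mul_le_one hp (k + 1) T
    have hS0 : 0 ≤ ∫ u in S, |e (k + 1) u * p u| := integral_nonneg fun _ => abs_nonneg _
    calc |t ^ (k + 1)| * (∫ u in S, |e (k + 1) u * p u|) * ∫ v in T, |e (k + 1) v * p v|
        ≤ t ^ (k + 1) * 1 * 1 := by rw [abs_of_nonneg (by positivity)]; gcongr
      _ = t ^ (k + 1) := by ring
  have hQ :=
    integrable_tsum_mul_prod (fun k => (hint k).restrict) (fun k => (hint k).restrict) hsum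
  have hpp : Integrable (fun z : ℝ × ℝ => p z.1 * p z.2)
      ((volume.restrict S).prod (volume.restrict T)) :=
    hp.integrable.restrict.mul_prod hp.integrable.restrict
  simp_rw [LSdens_eq_add_tsum]
  rw [integral_integral (hpp.add hQ), integral_add hpp hQ, integral_prod_mul p p,
    integral_tsum_mul_prod (fun k => (hint k).restrict) (fun k => (hint k).restrict) hsum]

theorem subordinated_joint_pmf_general
    (p : ℝ → ℝ) (e : ℕ → ℝ → ℝ)
    (hp : IsProbDensity p) (he : OrthonormalSystem p e)
    (t : ℝ) (ht : t ∈ Set.Ico (0 : ℝ) 1)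
    (N : ℕ) (A : Fin N → Set ℝ)
    (m : ℕ) (hm : 1 ≤ m)
    (hrank : ∀ i, ∀ h : ℕ, 1 ≤ h → h < m → (∫ u in A i, e h u * p u) = 0) :
    ∀ i j : Fin N,
      Summable
        (fun h : ℕ =>
          |t ^ (m + h) * (∫ u in A i, e (m + h) u * p u) *
              (∫ u in A j, e (m + h) u * p u)|) ∧
      (∫ u in A i, ∫ v in A j, LSdens p e t u v)
          = (∫ u in A i, p u) * (∫ u in A j, p u) +
            ∑' h : ℕ,
              t ^ (m + h) * (∫ u in A i, e (m + h) u * p u) *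
                (∫ u in A j, e (m + h) u * p u) ∧
      |(∫ u in A i, ∫ v in A j, LSdens p e t u v) -
          (∫ u in A i, p u) * (∫ u in A j, p u)|
        ≤ t ^ m / (1 - t) := by
  intro i j
  obtain ⟨ht0, ht1⟩ := ht
  have hterm (h : ℕ) : ‖t ^ (m + h) * (∫ u in A i, e (m + h) u * p u) *
      ∫ u in A j, e (m + h) u * p u‖ ≤ t ^ m * t ^ h := by
    have hci := he.abs_setIntegral_mul_le_one hp (m + h) (A i)
    have hcj := he.abs_setIntegral_mul_le_one hp (m + h) (A j)
    rw [Real.norm_eq_abs, abs_mul, abs_mul, abs_of_nonneg (by positivity), pow_add]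
    calc _ ≤ t ^ m * t ^ h * 1 * 1 := by gcongr
      _ = t ^ m * t ^ h := by ring
  have hgeom : HasSum (fun h : ℕ => t ^ m * t ^ h) (t ^ m / (1 - t)) :=
    (hasSum_geometric_of_lt_one ht0 ht1).mul_left (t ^ m)
  have hpmf : ∫ u in A i, ∫ v in A j, LSdens p e t u v =
      (∫ u in A i, p u) * (∫ u in A j, p u) +
        ∑' h : ℕ, t ^ (m + h) * (∫ u in A i, e (m + h) u * p u) *
          ∫ u in A j, e (m + h) u * p u := by
    rw [setIntegral_setIntegral_LSdens hp he ht0 ht1,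
      ← tsum_nat_add_eq_tsum_of_eq_zero (k := m - 1) fun k hk => by
        rw [hrank i (k + 1) (by omega) (by omega), mul_zero, zero_mul]]
    exact congrArg _ (tsum_congr fun h => by rw [show h + (m - 1) + 1 = m + h by omega])
  refine ⟨.of_nonneg_of_le (fun _ => abs_nonneg _) hterm hgeom.summable, hpmf, ?_⟩
  rw [hpmf, add_sub_cancel_left]
  exact tsum_of_norm_bounded hgeom hterm

/-- **Joint probability mass function of the subordinated pair:** under the
rank-`m` condition, for every `t ∈ [0,1)` and all `i, j`,
`π_{ij}(t) = p_i p_j + ∑_{h ≥ m} t^h c_{h,i} c_{h,j}`, where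
`c_{h,i} = ∫_{A_i} e_h(u) p(u) du`, the series converging absolutely; in
particular `|π_{ij}(t) − p_i p_j| ≤ t^m / (1 − t)`. -/
theorem subordinated_joint_pmf
    (p : ℝ → ℝ) (e : ℕ → ℝ → ℝ)
    (hp : IsProbDensity p) (he : OrthonormalSystem p e)
    (t : ℝ) (ht : t ∈ Set.Ico (0 : ℝ) 1)
    (hconv : KerConvergesInL2 p e t)
    (hnonneg : ∀ᵐ w : ℝ × ℝ, 0 ≤ LSdens p e t w.1 w.2)
    (N : ℕ) (A : Fin N → Set ℝ)
    (hAmeas : ∀ i, MeasurableSet (A i))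
    (hAdisj : Pairwise (Function.onFun Disjoint A))
    (hAfull : LSmeasure p (⋃ i, A i)ᶜ = 0)
    (hApos : ∀ i, 0 < ∫ u in A i, p u)
    (m : ℕ) (hm : 1 ≤ m)
    (hrank : ∀ i, ∀ h : ℕ, 1 ≤ h → h < m → (∫ u in A i, e h u * p u) = 0) :
    ∀ i j : Fin N,
      Summable
        (fun h : ℕ =>
          |t ^ (m + h) * (∫ u in A i, e (m + h) u * p u) *
              (∫ u in A j, e (m + h) u * p u)|) ∧
      (∫ u in A i, ∫ v in A j, LSdens p e t u v)
          = (∫ u in A i, p u) * (∫ u in A j, p u) +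
            ∑' h : ℕ,
              t ^ (m + h) * (∫ u in A i, e (m + h) u * p u) *
                (∫ u in A j, e (m + h) u * p u) ∧
      |(∫ u in A i, ∫ v in A j, LSdens p e t u v) -
          (∫ u in A i, p u) * (∫ u in A j, p u)|
        ≤ t ^ m / (1 - t) :=
  subordinated_joint_pmf_general p e hp he t ht N A m hm hrank

end
end

section
/- Sharp quantitative form of Lemma 1: under the hypotheses that Q_t converges in L²(μ⊗μ) and 1 + Q_t ≥ 0 a.e. for t ∈ [0,1), the Shannon mutual information S(t) := ∫∫ p_t(u,v) ln( p_t(u,v)/(p(u)p(v)) ) du dv satisfies 0 ≤ S(t) ≤ t²/(1−t²) for every t ∈ [0,1); in particular, under Assumption I, S(γ(r)) = O(r^{-2ϱ}) as r → ∞. -/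
open MeasureTheory Real Filter Asymptotics

noncomputable section

/-!
Write `Q = Q_t` and `ν = μ ⊗ μ`; then `S(t) = ∫ (1 + Q) log (1 + Q) dν`, and the elementary bounds
`x ≤ (1 + x) log (1 + x) ≤ x + x²` for `x ≥ -1` squeeze it between `∫ Q dν` and `∫ Q dν + ∫ Q² dν`.
The functions `e_k ⊗ e_k` are orthonormal in `L²(ν)` and, for `k ≥ 1`, orthogonal to `e_0 ⊗ e_0 = 1`,
so every partial sum of `Q` has mean zero and squared norm `∑ t^{2k} ≤ t²/(1 - t²)`. Fatou's lemma
passes the norm bound to `Q` and `L²` convergence passes the mean, whence `0 ≤ S(t) ≤ t²/(1 - t²)`.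
This is `O(t²)` as `t → 0`, so `S(γ(r)) = O(γ(r)²) = O(r^{-2ϱ})`.
-/

lemma self_sub_one_le_mul_log_le {y : ℝ} (hy : 0 ≤ y) :
    y - 1 ≤ y * log y ∧ y * log y ≤ y * (y - 1) := by
  refine ⟨self_sub_one_le_mul_log hy, ?_⟩
  rcases hy.eq_or_lt with rfl | hy
  · simp
  · exact mul_le_mul_of_nonneg_left (log_le_sub_one_of_pos hy) hy.le

section SquareIntegrable

variable {α : Type*} [MeasurableSpace α] {μ : Measure α}

lemma memLp_two_of_integral_mul_self_eq_one {f : α → ℝ} (hf : AEStronglyMeasurable f μ)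
    (h : ∫ x, f x * f x ∂μ = 1) : MemLp f 2 μ := by
  refine (memLp_two_iff_integrable_sq hf).2 ?_
  simp only [sq]
  by_contra hint
  simp [integral_undef hint] at h

lemma integral_sq_sum_of_orthonormal {ι : Type*} [DecidableEq ι] {φ : ι → α → ℝ}
    (hint : ∀ k l, Integrable (fun x => φ k x * φ l x) μ)
    (horth : ∀ k l, ∫ x, φ k x * φ l x ∂μ = if k = l then 1 else 0) (a : ι → ℝ) (s : Finset ι) :
    ∫ x, (∑ k ∈ s, a k * φ k x) ^ 2 ∂μ = ∑ k ∈ s, a k ^ 2 := by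
  have hexpand : ∀ x, (∑ k ∈ s, a k * φ k x) ^ 2
      = ∑ k ∈ s, ∑ l ∈ s, a k * a l * (φ k x * φ l x) := fun x => by
    rw [sq, Finset.sum_mul_sum]
    exact Finset.sum_congr rfl fun k _ => Finset.sum_congr rfl fun l _ => by ring
  simp_rw [hexpand]
  rw [integral_finsetSum _ fun k _ => integrable_finsetSum _ fun l _ => (hint k l).const_mul _]
  refine Finset.sum_congr rfl fun k hk => ?_
  rw [integral_finsetSum _ fun l _ => (hint k l).const_mul _]
  simp_rw [integral_const_mul, horth, mul_ite, mul_zero, Finset.sum_ite_eq, if_pos hk, mul_one, sq]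

lemma memLp_two_and_integral_sq_le_of_tendsto_ae {f : ℕ → α → ℝ} {g : α → ℝ} {C : ℝ}
    (hf : ∀ n, MemLp (f n) 2 μ) (hC : ∀ n, ∫ x, f n x ^ 2 ∂μ ≤ C)
    (hfg : ∀ᵐ x ∂μ, Tendsto (fun n => f n x) atTop (nhds (g x))) :
    MemLp g 2 μ ∧ ∫ x, g x ^ 2 ∂μ ≤ C := by
  have hg : AEStronglyMeasurable g μ :=
    aestronglyMeasurable_of_tendsto_ae atTop (fun n => (hf n).1) hfg
  have hg2 : AEStronglyMeasurable (fun x => g x ^ 2) μ := hg.pow 2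
  have hlint : ∫⁻ x, ENNReal.ofReal (g x ^ 2) ∂μ ≤ ENNReal.ofReal C := by
    calc ∫⁻ x, ENNReal.ofReal (g x ^ 2) ∂μ
        = ∫⁻ x, liminf (fun n => ENNReal.ofReal (f n x ^ 2)) atTop ∂μ := by
          refine lintegral_congr_ae (hfg.mono fun x hx => ?_)
          exact ((ENNReal.continuous_ofReal.tendsto _).comp (hx.pow 2)).liminf_eq.symm
      _ ≤ liminf (fun n => ∫⁻ x, ENNReal.ofReal (f n x ^ 2) ∂μ) atTop :=
          lintegral_liminf_le' fun n => ((hf n).1.pow 2).aemeasurable.ennreal_ofReal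
      _ ≤ ENNReal.ofReal C := by
          refine liminf_le_of_frequently_le' (Frequently.of_forall fun n => ?_)
          rw [← ofReal_integral_eq_lintegral_ofReal (hf n).integrable_sq
            (ae_of_all _ fun x => sq_nonneg _)]
          exact ENNReal.ofReal_le_ofReal (hC n)
  have hint : Integrable (fun x => g x ^ 2) μ :=
    ⟨hg2, (hasFiniteIntegral_iff_ofReal (ae_of_all _ fun x => sq_nonneg _)).2
      (hlint.trans_lt ENNReal.ofReal_lt_top)⟩
  refine ⟨(memLp_two_iff_integrable_sq hg).2 hint, ?_⟩
  have hC0 : 0 ≤ C := (integral_nonneg fun x => sq_nonneg (f 0 x)).trans (hC 0)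
  rw [integral_eq_lintegral_of_nonneg_ae (ae_of_all _ fun x => sq_nonneg _) hg2]
  exact ENNReal.toReal_le_of_le_ofReal hC0 hlint

lemma integral_eq_zero_of_tendsto_integral_sq_sub [IsProbabilityMeasure μ] {f : ℕ → α → ℝ}
    {g : α → ℝ} (hf : ∀ n, MemLp (f n) 2 μ) (hg : MemLp g 2 μ) (hf0 : ∀ n, ∫ x, f n x ∂μ = 0)
    (hfg : Tendsto (fun n => ∫ x, (g x - f n x) ^ 2 ∂μ) atTop (nhds 0)) :
    ∫ x, g x ∂μ = 0 := by
  -- `Var[g - f n] ≥ 0`, and `g - f n` has mean `∫ g`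
  have hle : ∀ n, (∫ x, g x ∂μ) ^ 2 ≤ ∫ x, (g x - f n x) ^ 2 ∂μ := fun n => by
    have hvar := ProbabilityTheory.variance_eq_sub (hg.sub (hf n))
    have hmean : ∫ x, (g - f n) x ∂μ = ∫ x, g x ∂μ := by
      simp only [Pi.sub_apply]
      rw [integral_sub (hg.integrable one_le_two) ((hf n).integrable one_le_two), hf0, sub_zero]
    rw [hmean] at hvar
    have := ProbabilityTheory.variance_nonneg (g - f n) μ
    simp only [Pi.pow_apply, Pi.sub_apply] at hvar
    linarith
  exact pow_eq_zero_iff two_ne_zero |>.1 <| le_antisymm (ge_of_tendsto' hfg hle) (sq_nonneg _)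

lemma integral_one_add_mul_log_one_add_bounds [IsFiniteMeasure μ] {Q : α → ℝ} (hQ : MemLp Q 2 μ)
    (hQ1 : ∀ᵐ x ∂μ, -1 ≤ Q x) (hmean : ∫ x, Q x ∂μ = 0) :
    Integrable (fun x => (1 + Q x) * log (1 + Q x)) μ ∧
      0 ≤ ∫ x, (1 + Q x) * log (1 + Q x) ∂μ ∧
      ∫ x, (1 + Q x) * log (1 + Q x) ∂μ ≤ ∫ x, Q x ^ 2 ∂μ := by
  have hQint : Integrable Q μ := hQ.integrable one_le_two
  have hbounds : ∀ᵐ x ∂μ, Q x ≤ (1 + Q x) * log (1 + Q x) ∧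
      (1 + Q x) * log (1 + Q x) ≤ Q x + Q x ^ 2 := hQ1.mono fun x hx => by
    have h := self_sub_one_le_mul_log_le (by linarith : 0 ≤ 1 + Q x)
    constructor <;> nlinarith [h.1, h.2]
  have hmeas : AEStronglyMeasurable (fun x => (1 + Q x) * log (1 + Q x)) μ := by
    have h1 : AEMeasurable (fun x => 1 + Q x) μ := aemeasurable_const.add hQ.1.aemeasurable
    exact (h1.mul (measurable_log.comp_aemeasurable h1)).aestronglyMeasurable
  have hint : Integrable (fun x => (1 + Q x) * log (1 + Q x)) μ := by
    refine (hQint.abs.add hQ.integrable_sq).mono' hmeas (hbounds.mono fun x hx => ?_)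
    rw [norm_eq_abs, abs_le, Pi.add_apply]
    constructor <;> nlinarith [neg_abs_le (Q x), le_abs_self (Q x), sq_nonneg (Q x)]
  refine ⟨hint, ?_, ?_⟩
  · simpa [hmean] using integral_mono_ae hQint hint (hbounds.mono fun x hx => hx.1)
  · have h := integral_mono_ae (g := fun x => Q x + Q x ^ 2) hint (hQint.add hQ.integrable_sq)
      (hbounds.mono fun x hx => hx.2)
    rwa [integral_add hQint hQ.integrable_sq, hmean, zero_add] at h

end SquareIntegrable

lemma sum_range_sq_pow_succ_le {t : ℝ} (ht : t ^ 2 < 1) (n : ℕ) :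
    ∑ k ∈ Finset.range n, (t ^ (k + 1)) ^ 2 ≤ t ^ 2 / (1 - t ^ 2) := by
  have hterm : ∀ k : ℕ, (t ^ (k + 1)) ^ 2 = t ^ 2 * (t ^ 2) ^ k := fun k => by ring
  simp_rw [hterm, ← Finset.mul_sum, div_eq_mul_inv]
  refine mul_le_mul_of_nonneg_left ?_ (sq_nonneg t)
  rw [← tsum_geometric_of_lt_one (sq_nonneg t) ht]
  exact (summable_geometric_of_lt_one (sq_nonneg t) ht).sum_le_tsum _ fun k _ => by positivity

section Tensor

variable {α : Type*} [MeasurableSpace α] {μ : Measure α} {e : ℕ → α → ℝ}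

lemma integrable_mul_of_orthonormal (hem : ∀ k, AEStronglyMeasurable (e k) μ)
    (horth : ∀ k l, ∫ x, e k x * e l x ∂μ = if k = l then 1 else 0) (k l : ℕ) :
    Integrable (fun x => e k x * e l x) μ :=
  have hL2 : ∀ k, MemLp (e k) 2 μ := fun k =>
    memLp_two_of_integral_mul_self_eq_one (hem k) (by simp [horth])
  (hL2 k).integrable_mul (hL2 l)

lemma integrable_tensor_mul_tensor (hem : ∀ k, AEStronglyMeasurable (e k) μ)
    (horth : ∀ k l, ∫ x, e k x * e l x ∂μ = if k = l then 1 else 0) (k l : ℕ) :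
    Integrable (fun w : α × α => e k w.1 * e k w.2 * (e l w.1 * e l w.2)) (μ.prod μ) := by
  have h := integrable_mul_of_orthonormal hem horth k l
  exact (h.mul_prod h).congr (ae_of_all _ fun w => by dsimp only; ring)

lemma integral_tensor_mul_tensor [SigmaFinite μ]
    (horth : ∀ k l, ∫ x, e k x * e l x ∂μ = if k = l then 1 else 0) (k l : ℕ) :
    ∫ w : α × α, e k w.1 * e k w.2 * (e l w.1 * e l w.2) ∂μ.prod μ = if k = l then 1 else 0 := by
  calc ∫ w : α × α, e k w.1 * e k w.2 * (e l w.1 * e l w.2) ∂μ.prod μ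
      = ∫ w : α × α, e k w.1 * e l w.1 * (e k w.2 * e l w.2) ∂μ.prod μ :=
        integral_congr_ae (ae_of_all _ fun w => by ring)
    _ = (∫ x, e k x * e l x ∂μ) * ∫ x, e k x * e l x ∂μ :=
        integral_prod_mul (fun x => e k x * e l x) (fun x => e k x * e l x)
    _ = if k = l then 1 else 0 := by
        rw [horth]
        split_ifs <;> simp

end Tensor

section LancasterSarmanov

variable {p : ℝ → ℝ} {e : ℕ → ℝ → ℝ}

instance (p : ℝ → ℝ) : SFinite (LSmeasure p) := by
  unfold LSmeasure
  infer_instance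

lemma integral_LSmeasure (hpm : Measurable p) (hp0 : ∀ᵐ u, 0 ≤ p u) (g : ℝ → ℝ) :
    ∫ u, g u ∂LSmeasure p = ∫ u, g u * p u := by
  rw [LSmeasure, integral_withDensity_eq_integral_toReal_smul hpm.ennreal_ofReal
    (ae_of_all _ fun _ => ENNReal.ofReal_lt_top)]
  exact integral_congr_ae (hp0.mono fun u hu => by
    dsimp only
    rw [ENNReal.toReal_ofReal hu, smul_eq_mul, mul_comm])

lemma integral_prod_LSmeasure (hpm : Measurable p) (hp0 : ∀ᵐ u, 0 ≤ p u) {F : ℝ × ℝ → ℝ}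
    (hF : Integrable F ((LSmeasure p).prod (LSmeasure p))) :
    ∫ w, F w ∂(LSmeasure p).prod (LSmeasure p) = ∫ u, ∫ v, p u * p v * F (u, v) := by
  rw [integral_prod _ hF, integral_LSmeasure hpm hp0]
  refine integral_congr_ae (ae_of_all _ fun u => ?_)
  dsimp only
  rw [integral_LSmeasure hpm hp0, ← integral_mul_const]
  exact integral_congr_ae (ae_of_all _ fun v => by ring)

lemma isProbabilityMeasure_LSmeasure (hp : IsProbDensity p) : IsProbabilityMeasure (LSmeasure p) := by
  obtain ⟨hpm, hp0, hp1⟩ := hp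
  have hint : Integrable p := by
    by_contra h
    simp [integral_undef h] at hp1
  constructor
  rw [LSmeasure, withDensity_apply _ MeasurableSet.univ, setLIntegral_univ,
    ← ofReal_integral_eq_lintegral_ofReal hint hp0, hp1, ENNReal.ofReal_one]

lemma integral_mul_LSmeasure (hp : IsProbDensity p) (he : OrthonormalSystem p e) (k l : ℕ) :
    ∫ u, e k u * e l u ∂LSmeasure p = if k = l then 1 else 0 := by
  rw [integral_LSmeasure hp.1 hp.2.1]
  exact he.2.2 k l

lemma integral_LSmeasure_eq_zero (hp : IsProbDensity p) (he : OrthonormalSystem p e) {k : ℕ}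
    (hk : k ≠ 0) : ∫ u, e k u ∂LSmeasure p = 0 := by
  simpa [he.1, hk] using integral_mul_LSmeasure hp he k 0

end LancasterSarmanov

section Kernel

variable {p : ℝ → ℝ} {e : ℕ → ℝ → ℝ} {t : ℝ}

def LSpartialSum (e : ℕ → ℝ → ℝ) (t : ℝ) (n : ℕ) (w : ℝ × ℝ) : ℝ :=
  ∑ k ∈ Finset.range n, t ^ (k + 1) * e (k + 1) w.1 * e (k + 1) w.2

lemma LSpartialSum_eq (n : ℕ) :
    LSpartialSum e t n =
      fun w => ∑ k ∈ Finset.range n, t ^ (k + 1) * (e (k + 1) w.1 * e (k + 1) w.2) := by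
  funext w
  simp only [LSpartialSum, mul_assoc]

lemma memLp_LSpartialSum (hp : IsProbDensity p) (he : OrthonormalSystem p e) (n : ℕ) :
    MemLp (LSpartialSum e t n) 2 ((LSmeasure p).prod (LSmeasure p)) := by
  have := isProbabilityMeasure_LSmeasure hp
  have hem : ∀ k, AEStronglyMeasurable (e k) (LSmeasure p) := fun k =>
    (he.2.1 k).aestronglyMeasurable
  have hterm : ∀ k, MemLp (fun w : ℝ × ℝ => e k w.1 * e k w.2) 2
      ((LSmeasure p).prod (LSmeasure p)) := fun k =>
    memLp_two_of_integral_mul_self_eq_one ((hem k).comp_fst.mul (hem k).comp_snd)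
      (by simpa using integral_tensor_mul_tensor (integral_mul_LSmeasure hp he) k k)
  rw [LSpartialSum_eq]
  exact memLp_finsetSum _ fun k _ => (hterm (k + 1)).const_mul _

lemma integral_sq_LSpartialSum (hp : IsProbDensity p) (he : OrthonormalSystem p e) (n : ℕ) :
    ∫ w, LSpartialSum e t n w ^ 2 ∂(LSmeasure p).prod (LSmeasure p) =
      ∑ k ∈ Finset.range n, (t ^ (k + 1)) ^ 2 := by
  have := isProbabilityMeasure_LSmeasure hp
  have horth := integral_mul_LSmeasure hp he
  have hem : ∀ k, AEStronglyMeasurable (e k) (LSmeasure p) := fun k =>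
    (he.2.1 k).aestronglyMeasurable
  rw [LSpartialSum_eq]
  exact integral_sq_sum_of_orthonormal (φ := fun k (w : ℝ × ℝ) => e (k + 1) w.1 * e (k + 1) w.2)
    (fun k l => integrable_tensor_mul_tensor hem horth _ _)
    (fun k l => by simp [integral_tensor_mul_tensor horth]) _ _

lemma integral_LSpartialSum (hp : IsProbDensity p) (he : OrthonormalSystem p e) (n : ℕ) :
    ∫ w, LSpartialSum e t n w ∂(LSmeasure p).prod (LSmeasure p) = 0 := by
  have := isProbabilityMeasure_LSmeasure hp
  have hint : ∀ k, Integrable (e k) (LSmeasure p) := fun k =>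
    (integrable_mul_of_orthonormal (fun k => (he.2.1 k).aestronglyMeasurable)
      (integral_mul_LSmeasure hp he) k 0).congr (ae_of_all _ fun u => by simp [he.1])
  rw [LSpartialSum_eq, integral_finsetSum _ fun k _ => ((hint _).mul_prod (hint _)).const_mul _]
  refine Finset.sum_eq_zero fun k _ => ?_
  rw [integral_const_mul, integral_prod_mul (fun u => e (k + 1) u) (fun v => e (k + 1) v),
    integral_LSmeasure_eq_zero hp he k.succ_ne_zero]
  simp

lemma memLp_LSker_and_integral_sq_le (hp : IsProbDensity p) (he : OrthonormalSystem p e)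
    (ht : t ^ 2 < 1) (hconv : KerConvergesInL2 p e t) :
    MemLp (fun w : ℝ × ℝ => LSker e t w.1 w.2) 2 ((LSmeasure p).prod (LSmeasure p)) ∧
      ∫ w, LSker e t w.1 w.2 ^ 2 ∂(LSmeasure p).prod (LSmeasure p) ≤ t ^ 2 / (1 - t ^ 2) :=
  memLp_two_and_integral_sq_le_of_tendsto_ae (memLp_LSpartialSum hp he)
    (fun n => (integral_sq_LSpartialSum hp he n).trans_le (sum_range_sq_pow_succ_le ht n))
    (hconv.1.mono fun _ hw => hw.hasSum.tendsto_sum_nat)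

lemma integral_LSker_eq_zero (hp : IsProbDensity p) (he : OrthonormalSystem p e)
    (ht : t ^ 2 < 1) (hconv : KerConvergesInL2 p e t) :
    ∫ w, LSker e t w.1 w.2 ∂(LSmeasure p).prod (LSmeasure p) = 0 := by
  have := isProbabilityMeasure_LSmeasure hp
  exact integral_eq_zero_of_tendsto_integral_sq_sub (memLp_LSpartialSum hp he)
    (memLp_LSker_and_integral_sq_le hp he ht hconv).1 (integral_LSpartialSum hp he) hconv.2

end Kernel

section MutualInformation

variable {p : ℝ → ℝ} {e : ℕ → ℝ → ℝ} {t : ℝ}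

def LSmutualInfo (p : ℝ → ℝ) (e : ℕ → ℝ → ℝ) (t : ℝ) : ℝ :=
  ∫ u, ∫ v, LSdens p e t u v * log (LSdens p e t u v / (p u * p v))

/-- Also where `p u * p v = 0`: then the left side is `0 * log (0 / 0) = 0`. -/
lemma LSdens_mul_log_div (u v : ℝ) :
    LSdens p e t u v * log (LSdens p e t u v / (p u * p v)) =
      p u * p v * ((1 + LSker e t u v) * log (1 + LSker e t u v)) := by
  by_cases h : p u * p v = 0
  · simp [LSdens, h]
  · rw [LSdens, mul_div_cancel_left₀ _ h, mul_assoc]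

lemma LSmutualInfo_bounds (hp : IsProbDensity p) (he : OrthonormalSystem p e) (ht : t ^ 2 < 1)
    (hconv : KerConvergesInL2 p e t)
    (hnonneg : ∀ᵐ w : ℝ × ℝ ∂((LSmeasure p).prod (LSmeasure p)), 0 ≤ 1 + LSker e t w.1 w.2) :
    0 ≤ LSmutualInfo p e t ∧ LSmutualInfo p e t ≤ t ^ 2 / (1 - t ^ 2) := by
  have := isProbabilityMeasure_LSmeasure hp
  obtain ⟨hL2, hsq⟩ := memLp_LSker_and_integral_sq_le hp he ht hconv
  obtain ⟨hint, hlower, hupper⟩ := integral_one_add_mul_log_one_add_bounds hL2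
    (hnonneg.mono fun _ hw => by linarith) (integral_LSker_eq_zero hp he ht hconv)
  have hS : LSmutualInfo p e t = ∫ w, (1 + LSker e t w.1 w.2) * log (1 + LSker e t w.1 w.2)
      ∂(LSmeasure p).prod (LSmeasure p) := by
    rw [integral_prod_LSmeasure hp.1 hp.2.1 hint]
    simp_rw [LSmutualInfo, LSdens_mul_log_div]
  rw [hS]
  exact ⟨hlower, hupper.trans hsq⟩

end MutualInformation

lemma isBigO_sq_of_le_sq_div_one_sub_sq {α : Type*} {l : Filter α} {S : ℝ → ℝ} {γ : α → ℝ}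
    (hS : ∀ t ∈ Set.Ico (0 : ℝ) 1, 0 ≤ S t ∧ S t ≤ t ^ 2 / (1 - t ^ 2))
    (hγ : ∀ᶠ r in l, γ r ∈ Set.Ico (0 : ℝ) 1) (hγ0 : Tendsto γ l (nhds 0)) :
    (fun r => S (γ r)) =O[l] fun r => γ r ^ 2 := by
  refine IsBigO.of_bound 2 ?_
  filter_upwards [hγ, hγ0.eventually (gt_mem_nhds (by norm_num : (0 : ℝ) < 1 / 2))]
    with r hr hhalf
  obtain ⟨hlower, hupper⟩ := hS _ hr
  have hsmall : γ r ^ 2 ≤ 1 / 2 := by nlinarith [hr.1]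
  rw [norm_of_nonneg hlower, norm_of_nonneg (sq_nonneg _)]
  calc S (γ r) ≤ γ r ^ 2 / (1 - γ r ^ 2) := hupper
    _ ≤ 2 * γ r ^ 2 := by
      rw [div_le_iff₀ (by linarith)]
      nlinarith [mul_le_mul_of_nonneg_left hsmall (sq_nonneg (γ r))]

theorem shannon_mutual_information_sharp_bound_general
    (p : ℝ → ℝ) (e : ℕ → ℝ → ℝ) (γ : ℝ → ℝ) (ϱ : ℝ)
    (hp : IsProbDensity p) (he : OrthonormalSystem p e)
    (hconv : ∀ t ∈ Set.Ico (0 : ℝ) 1, KerConvergesInL2 p e t)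
    (hnonneg : ∀ t ∈ Set.Ico (0 : ℝ) 1,
      ∀ᵐ w : ℝ × ℝ ∂((LSmeasure p).prod (LSmeasure p)),
        0 ≤ 1 + LSker e t w.1 w.2)
    (hγrange : ∀ r > (0 : ℝ), γ r ∈ Set.Ico (0 : ℝ) 1)
    (hγ0 : Tendsto γ atTop (nhds 0))
    (hγO : γ =O[atTop] fun r : ℝ => r ^ (-ϱ)) :
    (∀ t ∈ Set.Ico (0 : ℝ) 1,
        0 ≤ (∫ u : ℝ, ∫ v : ℝ,
              LSdens p e t u v * Real.log (LSdens p e t u v / (p u * p v))) ∧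
          (∫ u : ℝ, ∫ v : ℝ,
              LSdens p e t u v * Real.log (LSdens p e t u v / (p u * p v)))
            ≤ t ^ 2 / (1 - t ^ 2)) ∧
      (fun r : ℝ =>
          ∫ u : ℝ, ∫ v : ℝ,
            LSdens p e (γ r) u v *
              Real.log (LSdens p e (γ r) u v / (p u * p v)))
        =O[atTop] fun r : ℝ => r ^ (-(2 * ϱ)) := by
  have hS : ∀ t ∈ Set.Ico (0 : ℝ) 1,
      0 ≤ LSmutualInfo p e t ∧ LSmutualInfo p e t ≤ t ^ 2 / (1 - t ^ 2) := fun t ht =>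
    LSmutualInfo_bounds hp he (by nlinarith [ht.1, ht.2]) (hconv t ht) (hnonneg t ht)
  have hγsq : (fun r => γ r ^ 2) =O[atTop] fun r : ℝ => r ^ (-(2 * ϱ)) := by
    refine (hγO.pow 2).congr' (.of_forall fun _ => rfl) ?_
    filter_upwards [eventually_gt_atTop 0] with r hr
    rw [← rpow_mul_natCast hr.le]
    ring_nf
  exact ⟨hS, (isBigO_sq_of_le_sq_div_one_sub_sq hS
    ((eventually_gt_atTop 0).mono hγrange) hγ0).trans hγsq⟩

/-- **Sharp quantitative form of Lemma 1:** for every `t ∈ [0,1)` the Shannon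
mutual information `S(t)` of the Lancaster–Sarmanov bivariate distribution
satisfies `0 ≤ S(t) ≤ t²/(1−t²)`; in particular, under Assumption I,
`S(γ(r)) = O(r^{-2ϱ})` as `r → ∞`. -/
theorem shannon_mutual_information_sharp_bound
    (p : ℝ → ℝ) (e : ℕ → ℝ → ℝ) (γ : ℝ → ℝ) (ϱ : ℝ) (hϱ : 0 < ϱ)
    (hp : IsProbDensity p) (he : OrthonormalSystem p e)
    (hconv : ∀ t ∈ Set.Ico (0 : ℝ) 1, KerConvergesInL2 p e t)
    (hnonneg : ∀ t ∈ Set.Ico (0 : ℝ) 1,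
      ∀ᵐ w : ℝ × ℝ ∂((LSmeasure p).prod (LSmeasure p)),
        0 ≤ 1 + LSker e t w.1 w.2)
    (hγrange : ∀ r > (0 : ℝ), γ r ∈ Set.Ico (0 : ℝ) 1)
    (hγ0 : Tendsto γ atTop (nhds 0))
    (hγO : γ =O[atTop] fun r : ℝ => r ^ (-ϱ)) :
    (∀ t ∈ Set.Ico (0 : ℝ) 1,
        0 ≤ (∫ u : ℝ, ∫ v : ℝ,
              LSdens p e t u v * Real.log (LSdens p e t u v / (p u * p v))) ∧
          (∫ u : ℝ, ∫ v : ℝ,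
              LSdens p e t u v * Real.log (LSdens p e t u v / (p u * p v)))
            ≤ t ^ 2 / (1 - t ^ 2)) ∧
      (fun r : ℝ =>
          ∫ u : ℝ, ∫ v : ℝ,
            LSdens p e (γ r) u v *
              Real.log (LSdens p e (γ r) u v / (p u * p v)))
        =O[atTop] fun r : ℝ => r ^ (-(2 * ϱ)) :=
  shannon_mutual_information_sharp_bound_general p e γ ϱ hp he hconv hnonneg hγrange hγ0 hγO
end
end
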